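/- If α or β is not odd (i.e., has some nonzero even-indexed coordinate), then C^{α,β,γ,δ}(d,r) = 0, where C^{α,β,γ,δ}(d,r) is the sum of r-real multiplicities over all marked floor diagrams of type (α,β,γ,δ). -/

import Mathlib

open scoped Classical

/-- `ℕ^∞`: finitely supported sequences of nonnegative integers. -/
abbrev Vec : Type := ℕ →₀ ℕ

/-- `|α| = Σᵢ (α)ᵢ`. -/
def vabs (a : Vec) : ℕ := a.sum fun _ v => v

/-- `Iα = Σᵢ i·(α)ᵢ`. -/
def vI (a : Vec) : ℕ := a.sum fun i v => i * v

/-- Partial sum `Σ_{j=1}^{k} (α)_j`. -/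
def psum (a : Vec) (k : ℕ) : ℕ := ∑ j ∈ Finset.Icc 1 k, a j

/-- `I^α = Πᵢ i^{(α)_i}` as a rational number. -/
def Iexp (a : Vec) : ℚ := ∏ i ∈ a.support, (i : ℚ) ^ a i

/-- A weighted oriented graph: a list of oriented edges with positive weights. -/
structure WGraph (V : Type) where
  edges : List (V × V)
  weight : Fin edges.length → ℕ
  weight_pos : ∀ i, 0 < weight i

namespace WGraph

variable {V V' : Type} [Fintype V] [Fintype V']

def tail (G : WGraph V) (i : Fin G.edges.length) : V := (G.edges.get i).1

def head (G : WGraph V) (i : Fin G.edges.length) : V := (G.edges.get i).2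

def Adj (G : WGraph V) (u v : V) : Prop :=
  ∃ i, (G.tail i = u ∧ G.head i = v) ∨ (G.tail i = v ∧ G.head i = u)

def Connected (G : WGraph V) : Prop := ∀ u v : V, Relation.ReflTransGen G.Adj u v

/-- A tree: connected with Euler characteristic `#V - #E = 1`. -/
def IsTree (G : WGraph V) : Prop := G.Connected ∧ Fintype.card V = G.edges.length + 1

/-- A source: all adjacent edges are outgoing. -/
def IsSource (G : WGraph V) (v : V) : Prop := ∀ i, G.head i ≠ v

/-- Divergence: sum of incoming weights minus sum of outgoing weights. -/
noncomputable def div (G : WGraph V) (v : V) : ℤ :=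
  (∑ i, if G.head i = v then (G.weight i : ℤ) else 0)
    - ∑ i, if G.tail i = v then (G.weight i : ℤ) else 0

/-- Floor diagram of genus 0 and degree `d`. -/
def IsFloorDiagram (G : WGraph V) (d : ℕ) : Prop :=
  G.IsTree ∧ (∀ v, ¬ G.IsSource v → G.div v = 1) ∧
  (∀ v, G.IsSource v → ∃! i, G.tail i = v) ∧
  (∑ v : V, if G.IsSource v then G.div v else 0) = -(d : ℤ)

/-- Edge adjacent to a source (`Edge^∞`). -/
def IsInfEdge (G : WGraph V) (i : Fin G.edges.length) : Prop :=
  G.IsSource (G.tail i) ∨ G.IsSource (G.head i)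

/-- Adjacency between elements (vertices or edges) of the graph. -/
def ElemAdj (G : WGraph V) : V ⊕ Fin G.edges.length → V ⊕ Fin G.edges.length → Prop
  | Sum.inl v, Sum.inr e => G.tail e = v ∨ G.head e = v
  | Sum.inr e, Sum.inl v => G.tail e = v ∨ G.head e = v
  | _, _ => False

/-- One step of the natural partial order on an oriented tree. -/
def Step (G : WGraph V) : V ⊕ Fin G.edges.length → V ⊕ Fin G.edges.length → Prop
  | Sum.inr e, Sum.inl v => G.head e = v
  | Sum.inl v, Sum.inr e => G.tail e = v
  | _, _ => False

/-- The natural (strict) partial order "greater than" on elements of an oriented tree. -/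
def ElemGT (G : WGraph V) : V ⊕ Fin G.edges.length → V ⊕ Fin G.edges.length → Prop :=
  Relation.TransGen G.Step

end WGraph

/-- `n = 2d - 1 + |α+β+2γ+2δ|` where `d = Iα+Iβ+2Iγ+2Iδ`. -/
noncomputable def mn (α β γ δ : Vec) : ℕ :=
  2 * (vI α + vI β + 2 * vI γ + 2 * vI δ) - 1 + vabs (α + β + 2 • γ + 2 • δ)

namespace WGraph

variable {V V' : Type} [Fintype V] [Fintype V']

/-- A marking of type `(α,β,γ,δ)` of a floor diagram, with marked points indexed by
`1,…,n`. -/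
structure IsMarking (G : WGraph V) (α β γ δ : Vec)
    (m : ℕ → V ⊕ Fin G.edges.length) : Prop where
  floor : G.IsFloorDiagram (vI α + vI β + 2 * vI γ + 2 * vI δ)
  inj : Set.InjOn m (Set.Icc 1 (mn α β γ δ))
  mono : ∀ i ∈ Set.Icc 1 (mn α β γ δ), ∀ j ∈ Set.Icc 1 (mn α β γ δ),
      G.ElemGT (m i) (m j) → j < i
  srcA : ∀ k, 1 ≤ k → ∀ i, psum α (k-1) + 1 ≤ i → i ≤ psum α k →
      ∃ v, m i = Sum.inl v ∧ G.IsSource v ∧ G.div v = -(k : ℤ)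
  srcG : ∀ k, 1 ≤ k → ∀ i, vabs α + 2 * psum γ (k-1) + 1 ≤ i →
      i ≤ vabs α + 2 * psum γ k →
      ∃ v, m i = Sum.inl v ∧ G.IsSource v ∧ G.div v = -(k : ℤ)
  edgeCount : ∀ k, 1 ≤ k →
      {e : Fin G.edges.length | G.IsInfEdge e ∧ G.weight e = k ∧
        ∃ i ∈ Set.Icc 1 (mn α β γ δ), m i = Sum.inr e}.ncard = β k + 2 * δ k
  srcEdge : ∀ v, G.IsSource v → ∀ e, (G.tail e = v ∨ G.head e = v) →
      Xor' (∃ i ∈ Set.Icc 1 (mn α β γ δ), m i = Sum.inl v)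
           (∃ i ∈ Set.Icc 1 (mn α β γ δ), m i = Sum.inr e)

/-- `{i, i+1}` is an `r`-pair. -/
def IsRPair (α γ : Vec) (n r i : ℕ) : Prop :=
  (∃ k, 1 ≤ k ∧ k ≤ vabs γ ∧ i = vabs α + 2 * k - 1) ∨
  (∃ k, 1 ≤ k ∧ k ≤ r ∧ i = n - 2 * k + 1)

/-- Membership in `Im(𝒟,m,r)`. -/
def InIm (G : WGraph V) (α γ : Vec) (r n : ℕ)
    (m : ℕ → V ⊕ Fin G.edges.length) (a : V ⊕ Fin G.edges.length) : Prop :=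
  ∃ i, IsRPair α γ n r i ∧ ¬ G.ElemAdj (m i) (m (i+1)) ∧ (a = m i ∨ a = m (i+1))

/-- The involution `ρ_{𝒟,m,r}`. -/
noncomputable def rho (G : WGraph V) (α γ : Vec) (r n : ℕ)
    (m : ℕ → V ⊕ Fin G.edges.length) (a : V ⊕ Fin G.edges.length) :
    V ⊕ Fin G.edges.length :=
  if h : InIm G α γ r n m a then
    (if a = m (Classical.choose h) then m (Classical.choose h + 1)
     else m (Classical.choose h))
  else a

/-- Equivalence of marked (weighted, oriented) graphs. -/
def MEquiv (G : WGraph V) (m : ℕ → V ⊕ Fin G.edges.length)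
    (G' : WGraph V') (m' : ℕ → V' ⊕ Fin G'.edges.length) (n : ℕ) : Prop :=
  ∃ (φ : V ≃ V') (σ : Fin G.edges.length ≃ Fin G'.edges.length),
    (∀ e, G'.tail (σ e) = φ (G.tail e)) ∧ (∀ e, G'.head (σ e) = φ (G.head e)) ∧
    (∀ e, G'.weight (σ e) = G.weight e) ∧
    ∀ i ∈ Set.Icc 1 n, m' i = Sum.map φ σ (m i)

/-- Isomorphism of weighted oriented graphs (forgetting markings). -/
def GEquiv (G : WGraph V) (G' : WGraph V') : Prop :=
  ∃ (φ : V ≃ V') (σ : Fin G.edges.length ≃ Fin G'.edges.length),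
    (∀ e, G'.tail (σ e) = φ (G.tail e)) ∧ (∀ e, G'.head (σ e) = φ (G.head e)) ∧
    (∀ e, G'.weight (σ e) = G.weight e)

/-- `(𝒟,m)` is `r`-real. -/
def IsRReal (G : WGraph V) (α β γ δ : Vec) (r : ℕ)
    (m : ℕ → V ⊕ Fin G.edges.length) : Prop :=
  MEquiv G m G (fun i => rho G α γ r (mn α β γ δ) m (m i)) (mn α β γ δ) ∧
  ∀ k, 1 ≤ k → {e : Fin G.edges.length | G.IsInfEdge e ∧ G.weight e = k ∧
      InIm G α γ r (mn α β γ δ) m (Sum.inr e)}.ncard = 2 * δ k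

/-- Complex multiplicity `μ^ℂ`. -/
noncomputable def muC (G : WGraph V) (α β γ δ : Vec) : ℚ :=
  (Iexp (2 • α + β + 4 • γ + 2 • δ))⁻¹ * ∏ e, (G.weight e : ℚ) ^ 2

/-- `r`-real multiplicity `μ^ℝ_r`. -/
noncomputable def muR (G : WGraph V) (α β γ δ : Vec) (r : ℕ)
    (m : ℕ → V ⊕ Fin G.edges.length) : ℚ :=
  if IsRReal G α β γ δ r m ∧
      (∀ e, 2 ∣ G.weight e → InIm G α γ r (mn α β γ δ) m (Sum.inr e)) then
    (-1 : ℚ) ^ (({v : V | ¬ G.IsSource v ∧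
        InIm G α γ r (mn α β γ δ) m (Sum.inl v)}.ncard) / 2)
      * (Iexp δ)⁻¹
      * ∏ e ∈ Finset.univ.filter
          (fun e => ¬ ∃ i ∈ Set.Icc 1 (mn α β γ δ - 2 * r), m i = Sum.inr e),
          (G.weight e : ℚ)
  else 0

end WGraph

/-- A bundled marked floor diagram of type `(α,β,γ,δ)`. -/
structure BMFD (α β γ δ : Vec) : Type 1 where
  V : Type
  [fV : Fintype V]
  G : WGraph V
  m : ℕ → V ⊕ Fin G.edges.length
  marking : G.IsMarking α β γ δ m

attribute [instance] BMFD.fV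

/-- Equivalence of bundled marked floor diagrams. -/
def BMFD.Equiv {α β γ δ : Vec} (X Y : BMFD α β γ δ) : Prop :=
  WGraph.MEquiv X.G X.m Y.G Y.m (mn α β γ δ)

noncomputable def BMFD.muC' {α β γ δ : Vec} (X : BMFD α β γ δ) : ℚ :=
  WGraph.muC X.G α β γ δ

noncomputable def BMFD.muR' {α β γ δ : Vec} (X : BMFD α β γ δ) (r : ℕ) : ℚ :=
  WGraph.muR X.G α β γ δ r X.m

/-! A source marked at an `α`-position has divergence `-k` with `k` even, so its unique outgoing
edge has even weight and must lie in `Im(𝒟,m,r)`; but every element of the image is marked, while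
a marking never marks both a source and its edge. For `β`, the `β k + 2 δ k` marked source edges of
even weight `k` would all lie in the image, which contains only `2 δ k` such edges. -/

lemma vabs_add (a b : Vec) : vabs (a + b) = vabs a + vabs b :=
  Finsupp.sum_add_index' (fun _ => rfl) (fun _ _ _ => rfl)

lemma vabs_two_smul (a : Vec) : vabs (2 • a) = 2 * vabs a := by
  rw [two_smul, vabs_add, two_mul]

lemma le_vabs (a : Vec) (k : ℕ) : a k ≤ vabs a := by
  by_cases hk : a k = 0
  · simp [hk]
  · exact Finset.single_le_sum (f := fun j => a j) (fun _ _ => Nat.zero_le _)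
      (Finsupp.mem_support_iff.2 hk)

lemma mul_le_vI (a : Vec) (k : ℕ) : k * a k ≤ vI a := by
  by_cases hk : a k = 0
  · simp [hk]
  · exact Finset.single_le_sum (f := fun j => j * a j) (fun _ _ => Nat.zero_le _)
      (Finsupp.mem_support_iff.2 hk)

lemma psum_le_vabs (a : Vec) (k : ℕ) : psum a k ≤ vabs a :=
  Finset.sum_le_sum_of_ne_zero fun _ _ hx => Finsupp.mem_support_iff.2 hx

lemma psum_eq_psum_pred_add {k : ℕ} (a : Vec) (hk : 1 ≤ k) :
    psum a k = psum a (k - 1) + a k := by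
  obtain ⟨j, rfl⟩ := Nat.exists_eq_add_of_le' hk
  simp only [psum, Nat.add_sub_cancel, Finset.sum_Icc_succ_top (Nat.le_add_left 1 j)]

lemma mn_eq (α β γ δ : Vec) : mn α β γ δ =
    2 * (vI α + vI β + 2 * vI γ + 2 * vI δ) - 1
      + (vabs α + vabs β + 2 * vabs γ + 2 * vabs δ) := by
  rw [mn, vabs_add, vabs_add, vabs_add, vabs_two_smul, vabs_two_smul]

lemma vabs_add_two_mul_vabs_le_mn (α β γ δ : Vec) : vabs α + 2 * vabs γ ≤ mn α β γ δ := by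
  rw [mn_eq]; omega

lemma two_mul_le_mn {α : Vec} (β γ δ : Vec) {k : ℕ} (hαk : α k ≠ 0) : 2 * k ≤ mn α β γ δ := by
  have hkα : k ≤ vI α :=
    (Nat.le_mul_of_pos_right k (Nat.pos_of_ne_zero hαk)).trans (mul_le_vI α k)
  have hα : 1 ≤ vabs α := (Nat.one_le_iff_ne_zero.2 hαk).trans (le_vabs α k)
  rw [mn_eq]; omega

namespace WGraph

variable {V : Type} {G : WGraph V}

-- For `2 * k > n` the truncated `n - 2 * k + 1` is `1`, so the pair is `{1, 2}`.
lemma IsRPair.mem_Icc {α γ : Vec} {n r i : ℕ} (hi : IsRPair α γ n r i)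
    (hn : vabs α + 2 * vabs γ ≤ n) (hn2 : 2 ≤ n) : i ∈ Set.Icc 1 n ∧ i + 1 ∈ Set.Icc 1 n := by
  simp only [Set.mem_Icc]
  rcases hi with ⟨k, hk1, hk2, rfl⟩ | ⟨k, hk1, -, rfl⟩ <;> omega

lemma InIm.exists_mem_Icc {α γ : Vec} {r n : ℕ} {m : ℕ → V ⊕ Fin G.edges.length}
    {a : V ⊕ Fin G.edges.length} (ha : G.InIm α γ r n m a)
    (hn : vabs α + 2 * vabs γ ≤ n) (hn2 : 2 ≤ n) : ∃ i ∈ Set.Icc 1 n, m i = a := by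
  obtain ⟨i, hi, -, rfl | rfl⟩ := ha
  · exact ⟨i, (hi.mem_Icc hn hn2).1, rfl⟩
  · exact ⟨i + 1, (hi.mem_Icc hn hn2).2, rfl⟩

lemma div_eq_neg_weight_of_isSource {v : V} (hv : G.IsSource v) {e : Fin G.edges.length}
    (he : ∀ j, G.tail j = v → j = e) (hev : G.tail e = v) : G.div v = -(G.weight e : ℤ) := by
  rw [div, Finset.sum_eq_zero fun j _ => if_neg (hv j),
    Finset.sum_eq_single_of_mem e (Finset.mem_univ e) fun j _ hj => if_neg fun hjv => hj (he j hjv),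
    if_pos hev, zero_sub]

lemma IsFloorDiagram.exists_tail_eq_of_isSource [Fintype V] {d : ℕ} (hG : G.IsFloorDiagram d)
    {v : V} (hv : G.IsSource v) : ∃ e, G.tail e = v ∧ G.div v = -(G.weight e : ℤ) := by
  obtain ⟨e, hev, he⟩ := hG.2.2.1 v hv
  exact ⟨e, hev, div_eq_neg_weight_of_isSource hv he hev⟩

namespace IsMarking

variable [Fintype V] {α β γ δ : Vec} {m : ℕ → V ⊕ Fin G.edges.length} (hm : G.IsMarking α β γ δ m)
include hm

lemma exists_marked_source {k : ℕ} (hk : 1 ≤ k) (hαk : α k ≠ 0) :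
    ∃ i ∈ Set.Icc 1 (mn α β γ δ), ∃ v, m i = Sum.inl v ∧ G.IsSource v ∧ G.div v = -(k : ℤ) := by
  have hps := psum_eq_psum_pred_add α hk
  have hle : psum α k ≤ mn α β γ δ :=
    (psum_le_vabs α k).trans ((Nat.le_add_right _ _).trans (vabs_add_two_mul_vabs_le_mn α β γ δ))
  exact ⟨psum α (k - 1) + 1, ⟨Nat.le_add_left 1 _, by omega⟩,
    hm.srcA k hk _ le_rfl (by omega)⟩

lemma alpha_eq_zero_of_even_mem_im {r k : ℕ} (hk : 1 ≤ k) (hk2 : 2 ∣ k)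
    (hIm : ∀ e, 2 ∣ G.weight e → G.InIm α γ r (mn α β γ δ) m (Sum.inr e)) : α k = 0 := by
  by_contra hαk
  obtain ⟨i, hi, v, hmv, hv, hdiv⟩ := hm.exists_marked_source hk hαk
  obtain ⟨e, hev, hdive⟩ := hm.floor.exists_tail_eq_of_isSource hv
  have hwe : G.weight e = k := by omega
  have he_marked := (hIm e (hwe ▸ hk2)).exists_mem_Icc (vabs_add_two_mul_vabs_le_mn α β γ δ)
    (le_trans (by omega) (two_mul_le_mn β γ δ hαk))
  rcases hm.srcEdge v hv e (Or.inl hev) with ⟨-, hne⟩ | ⟨-, hnv⟩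
  · exact hne he_marked
  · exact hnv ⟨i, hi, hmv⟩

lemma beta_eq_zero_of_even_mem_im {r k : ℕ} (hk : 1 ≤ k) (hk2 : 2 ∣ k)
    (hreal : G.IsRReal α β γ δ r m)
    (hIm : ∀ e, 2 ∣ G.weight e → G.InIm α γ r (mn α β γ δ) m (Sum.inr e)) : β k = 0 := by
  have hsub : {e | G.IsInfEdge e ∧ G.weight e = k ∧
        ∃ i ∈ Set.Icc 1 (mn α β γ δ), m i = Sum.inr e} ⊆
      {e | G.IsInfEdge e ∧ G.weight e = k ∧ G.InIm α γ r (mn α β γ δ) m (Sum.inr e)} :=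
    fun e ⟨hinf, hwe, _⟩ => ⟨hinf, hwe, hIm e (hwe ▸ hk2)⟩
  have hle := Set.ncard_le_ncard hsub (Set.toFinite _)
  rw [hm.edgeCount k hk, hreal.2 k hk] at hle
  omega

end IsMarking

end WGraph

/-- If `α` or `β` is not odd (has a nonzero even-indexed coordinate), then every marked
floor diagram of type `(α,β,γ,δ)` has vanishing `r`-real multiplicity; consequently
`C^{α,β,γ,δ}(d,r)`, the sum of `r`-real multiplicities over all marked floor diagrams
of type `(α,β,γ,δ)`, is zero. -/
theorem stmt11 {V : Type} [Fintype V] (G : WGraph V) (α β γ δ : Vec) (r : ℕ)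
    (m : ℕ → V ⊕ Fin G.edges.length) (hm : G.IsMarking α β γ δ m)
    (h : ∃ i, 1 ≤ i ∧ (α (2 * i) ≠ 0 ∨ β (2 * i) ≠ 0)) :
    G.muR α β γ δ r m = 0 := by
  obtain ⟨i, hi, hαβ⟩ := h
  have hk : 1 ≤ 2 * i := by omega
  refine if_neg fun ⟨hreal, hIm⟩ => ?_
  rcases hαβ with hα | hβ
  · exact hα (hm.alpha_eq_zero_of_even_mem_im hk (dvd_mul_right 2 i) hIm)
  · exact hβ (hm.beta_eq_zero_of_even_mem_im hk (dvd_mul_right 2 i) hreal hIm)
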